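/- Let p > r and k := ((μ − p − σ²/2) + √((μ − p − σ²/2)² + 2σ²λ))/σ², and assume (μ−r)/(σ²(k+1)) ≥ 1. Let w₀ > 0 and define g(w) := (w/w₀)^{−k} for w > 0. Then for every w > 0 and every γ ∈ [0, w], one has [rw + (μ−r)γ − pw]·g′(w) + (1/2)σ²γ²·g″(w) − λ·g(w) ≥ 0, with equality if and only if γ = w. -/

import Mathlib

/-!
The exponent `k` is the positive root of `σ²/2 · k² - (μ - p - σ²/2) · k - λ = 0`. For
`g(w) = (w/w₀)^(-k)` one has `g' = -k g / w` and `g'' = k (k+1) g / w²`, and with the quadratic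
equation for `k` the HJB expression factors as
`k g / w² · (w - γ) · ((μ - r) w - σ²(k+1)(γ + w)/2)`.
When `σ²(k+1) ≤ μ - r` the last factor is at least `σ²(k+1)(w - γ)/2`, so the product is
nonnegative on `γ ≤ w` and vanishes only at `γ = w`.
-/

open Filter Topology

lemma sq_div_two_mul_sub_mul_eq_of_eq_add_sqrt {s A lam k : ℝ} (hs : 0 < s) (hlam : 0 ≤ lam)
    (hk : k = (A + √(A ^ 2 + 2 * s * lam)) / s) : s / 2 * k ^ 2 - A * k = lam := by
  set S := √(A ^ 2 + 2 * s * lam)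
  have hS : S ^ 2 = A ^ 2 + 2 * s * lam := Real.sq_sqrt (by positivity)
  rw [hk]
  field_simp
  linear_combination hS

lemma pos_of_eq_add_sqrt {s A lam k : ℝ} (hs : 0 < s) (hlam : 0 < lam)
    (hk : k = (A + √(A ^ 2 + 2 * s * lam)) / s) : 0 < k := by
  have hA : |A| < √(A ^ 2 + 2 * s * lam) :=
    (Real.lt_sqrt (abs_nonneg A)).2 (by rw [sq_abs]; nlinarith)
  rw [hk]
  exact div_pos (by linarith [neg_abs_le A]) hs

section DivRpow

variable {c e x : ℝ}

lemma hasDerivAt_div_rpow (hc : 0 < c) (hx : 0 < x) :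
    HasDerivAt (fun y => (y / c) ^ e) (e * (x / c) ^ e / x) x := by
  have hxc : 0 < x / c := div_pos hx hc
  convert ((hasDerivAt_id' x).div_const c).rpow_const (p := e) (Or.inl hxc.ne') using 1
  rw [Real.rpow_sub_one hxc.ne']
  field_simp

lemma deriv_div_rpow (hc : 0 < c) (hx : 0 < x) :
    deriv (fun y => (y / c) ^ e) x = e * (x / c) ^ e / x :=
  (hasDerivAt_div_rpow hc hx).deriv

lemma deriv_deriv_div_rpow (hc : 0 < c) (hx : 0 < x) :
    deriv (deriv fun y => (y / c) ^ e) x = e * (e - 1) * (x / c) ^ e / x ^ 2 := by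
  have hev : deriv (fun y => (y / c) ^ e) =ᶠ[𝓝 x] fun y => e * (y / c) ^ e / y :=
    (eventually_gt_nhds hx).mono fun y hy => deriv_div_rpow hc hy
  rw [hev.deriv_eq, (((hasDerivAt_div_rpow hc hx).const_mul e).fun_div (hasDerivAt_id' x) hx.ne').deriv]
  field_simp

end DivRpow

lemma hjb_power_eq_mul {r mu s p lam k G w γ : ℝ} (hw : w ≠ 0)
    (hroot : s / 2 * k ^ 2 - (mu - p - s / 2) * k = lam) :
    (r * w + (mu - r) * γ - p * w) * (-k * G / w)
        + 1 / 2 * s * γ ^ 2 * (-k * (-k - 1) * G / w ^ 2) - lam * G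
      = k * G / w ^ 2 * ((w - γ) * ((mu - r) * w - s * (k + 1) / 2 * (γ + w))) := by
  subst hroot
  field_simp
  ring

lemma sub_mul_sub_nonneg_and_eq_zero_iff {a m w γ : ℝ} (ha : 0 < a) (ham : a ≤ m) (hw : 0 ≤ w)
    (hγ : γ ≤ w) :
    0 ≤ (w - γ) * (m * w - a / 2 * (γ + w)) ∧ ((w - γ) * (m * w - a / 2 * (γ + w)) = 0 ↔ γ = w) := by
  have hlow : a / 2 * (w - γ) ^ 2 ≤ (w - γ) * (m * w - a / 2 * (γ + w)) := by
    nlinarith [mul_nonneg (mul_nonneg (sub_nonneg.2 hγ) hw) (sub_nonneg.2 ham)]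
  refine ⟨le_trans (by positivity) hlow, fun h => ?_, fun h => by rw [h]; ring⟩
  have hsq : (w - γ) ^ 2 = 0 := le_antisymm (by nlinarith) (sq_nonneg _)
  linarith [pow_eq_zero_iff two_ne_zero |>.1 hsq]

theorem stmt_9_general (r mu sigma lam p k w0 : ℝ)
    (hs : 0 < sigma) (hlam : 0 < lam)
    (hk : k = ((mu - p - sigma^2/2) + Real.sqrt ((mu - p - sigma^2/2)^2 + 2*sigma^2*lam))
            / sigma^2)
    (hcase : 1 ≤ (mu - r) / (sigma^2 * (k + 1)))
    (hw0 : 0 < w0)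
    (g : ℝ → ℝ) (hg : ∀ w, g w = (w / w0) ^ (-k)) :
    ∀ w : ℝ, 0 < w → ∀ γ ∈ Set.Icc 0 w,
      0 ≤ (r * w + (mu - r) * γ - p * w) * deriv g w
            + (1/2) * sigma^2 * γ^2 * deriv (deriv g) w - lam * g w ∧
      ((r * w + (mu - r) * γ - p * w) * deriv g w
            + (1/2) * sigma^2 * γ^2 * deriv (deriv g) w - lam * g w = 0
        ↔ γ = w) := by
  intro w hw γ ⟨_, hγw⟩
  have hs2 : 0 < sigma ^ 2 := by positivity
  have hkpos : 0 < k := pos_of_eq_add_sqrt hs2 hlam hk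
  have hvol : sigma ^ 2 * (k + 1) ≤ mu - r := by
    rwa [le_div_iff₀ (by positivity), one_mul] at hcase
  obtain rfl : g = fun y => (y / w0) ^ (-k) := funext hg
  rw [deriv_div_rpow hw0 hw, deriv_deriv_div_rpow hw0 hw,
    hjb_power_eq_mul hw.ne' (sq_div_two_mul_sub_mul_eq_of_eq_add_sqrt hs2 hlam.le hk)]
  have hC : 0 < k * (w / w0) ^ (-k) / w ^ 2 := by positivity
  obtain ⟨hP, hP0⟩ := sub_mul_sub_nonneg_and_eq_zero_iff (by positivity) hvol hw.le hγw
  exact ⟨mul_nonneg hC.le hP, by rw [mul_eq_zero, or_iff_right hC.ne', hP0]⟩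

theorem stmt_9 (r mu sigma lam p k w0 : ℝ)
    (hr : 0 < r) (hmu : r < mu) (hs : 0 < sigma) (hlam : 0 < lam) (hp : r < p)
    (hk : k = ((mu - p - sigma^2/2) + Real.sqrt ((mu - p - sigma^2/2)^2 + 2*sigma^2*lam))
            / sigma^2)
    (hcase : 1 ≤ (mu - r) / (sigma^2 * (k + 1)))
    (hw0 : 0 < w0)
    (g : ℝ → ℝ) (hg : ∀ w, g w = (w / w0) ^ (-k)) :
    ∀ w : ℝ, 0 < w → ∀ γ ∈ Set.Icc 0 w,
      0 ≤ (r * w + (mu - r) * γ - p * w) * deriv g w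
            + (1/2) * sigma^2 * γ^2 * deriv (deriv g) w - lam * g w ∧
      ((r * w + (mu - r) * γ - p * w) * deriv g w
            + (1/2) * sigma^2 * γ^2 * deriv (deriv g) w - lam * g w = 0
        ↔ γ = w) :=
  stmt_9_general r mu sigma lam p k w0 hs hlam hk hcase hw0 g hg
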